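/- Let Σ¹ₓ and Σ²ₓ be p×p full-rank covariance matrices, and let W be a full-rank r×p matrix defining a common linear map y = Wx. Writing M as the (p+r)×p matrix obtained by stacking the identity Iₚ on top of W, and Σⁱₓᵧ = M Σⁱₓ Mᵀ, the conditional LogDet divergence vanishes: D_ℓD(Σ¹ₓᵧ ‖ Σ²ₓᵧ) − D_ℓD(Σ¹ₓ ‖ Σ²ₓ) = 0. -/
import Mathlib


open Matrix

/-- The LogDet divergence on matrices indexed by a finite type `ι`. -/
noncomputable def logDetDiv {ι : Type*} [Fintype ι] [DecidableEq ι]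
    (A B : Matrix ι ι ℝ) : ℝ :=
  Matrix.trace (B⁻¹ * A) + Real.log (Matrix.det B / Matrix.det A) - Fintype.card ι


lemma eq_of_mulVec_eq' {m n : Type*} [Fintype n] [DecidableEq n]
    {A B : Matrix m n ℝ} (h : ∀ v, A.mulVec v = B.mulVec v) : A = B := by
  ext i j
  have := congrFun (h (Pi.single j 1)) i
  simpa [Matrix.mulVec_single] using this

lemma logDetDiv_congr {n : ℕ} (A B G : Matrix (Fin n) (Fin n) ℝ)
    (hA : A.det ≠ 0) (hB : IsUnit B.det) (hG : IsUnit G.det) :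
    logDetDiv (Gᵀ * A * G) (Gᵀ * B * G) = logDetDiv A B := by
  have hGt : IsUnit Gᵀ.det := by rwa [det_transpose]
  have hGd : G.det ≠ 0 := by
    intro h; rw [h] at hG; simpa using hG
  unfold logDetDiv
  have hinv : (Gᵀ * B * G)⁻¹ = G⁻¹ * (B⁻¹ * Gᵀ⁻¹) := by
    rw [Matrix.mul_inv_rev, Matrix.mul_inv_rev]
  have htr : Matrix.trace ((Gᵀ * B * G)⁻¹ * (Gᵀ * A * G)) = Matrix.trace (B⁻¹ * A) := by
    rw [hinv]
    have : G⁻¹ * (B⁻¹ * Gᵀ⁻¹) * (Gᵀ * A * G) = G⁻¹ * (B⁻¹ * A) * G := by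
      simp only [Matrix.mul_assoc]
      rw [Matrix.nonsing_inv_mul_cancel_left _ _ hGt]
    rw [this, Matrix.trace_mul_cycle, ← Matrix.mul_assoc,
      Matrix.mul_nonsing_inv _ hG, Matrix.one_mul]
  have hdet : (Gᵀ * B * G).det / (Gᵀ * A * G).det = B.det / A.det := by
    rw [Matrix.det_mul, Matrix.det_mul, Matrix.det_mul, Matrix.det_mul, det_transpose]
    field_simp
  rw [htr, hdet]

/-- Let `Σ¹ₓ, Σ²ₓ` be `p×p` positive definite matrices and `W` a full-rank
`r×p` matrix.  With `M = [Iₚ; W]` (identity stacked on top of `W`) and `Σⁱₓᵧ = M Σⁱₓ Mᵀ`,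
the conditional LogDet divergence vanishes:
`D_ℓD(Σ¹ₓᵧ‖Σ²ₓᵧ) − D_ℓD(Σ¹ₓ‖Σ²ₓ) = 0`, where the divergence of the rank-deficient matrices
`Σⁱₓᵧ` is computed by compressing onto any orthonormal basis `Q` of their common range
(the range of `M`). -/
theorem conditional_logDetDiv_common_linear_map_eq_zero {p r : ℕ}
    (S1 S2 : Matrix (Fin p) (Fin p) ℝ) (h1 : S1.PosDef) (h2 : S2.PosDef)
    (W : Matrix (Fin r) (Fin p) ℝ) (hW : W.rank = min r p)
    (M : Matrix (Fin p ⊕ Fin r) (Fin p) ℝ) (hM : M = Matrix.fromRows 1 W)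
    (Q : Matrix (Fin p ⊕ Fin r) (Fin p) ℝ) (hQ : Qᵀ * Q = 1)
    (hrange : LinearMap.range Q.mulVecLin = LinearMap.range M.mulVecLin) :
    logDetDiv (Qᵀ * (M * S1 * Mᵀ) * Q) (Qᵀ * (M * S2 * Mᵀ) * Q) -
      logDetDiv S1 S2 = 0 := by
  have hApd : (Mᵀ * M).PosDef := by
    rw [hM, Matrix.transpose_fromRows, Matrix.fromCols_mul_fromRows]
    have hW2 : (Wᵀ * W).PosSemidef := Matrix.posSemidef_conjTranspose_mul_self W
    simpa using (Matrix.PosDef.one (n := Fin p) (R := ℝ)).add_posSemidef hW2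
  have hAunit : IsUnit (Mᵀ * M).det := isUnit_iff_ne_zero.mpr hApd.det_pos.ne'
  set L : Matrix (Fin p) (Fin p ⊕ Fin r) ℝ := (Mᵀ * M)⁻¹ * Mᵀ with hL
  have hLM : L * M = 1 := by
    rw [hL, Matrix.mul_assoc, Matrix.nonsing_inv_mul _ hAunit]
  have hQQQ : Q * Qᵀ * Q = Q := by rw [Matrix.mul_assoc, hQ, Matrix.mul_one]
  have hMLM : M * L * M = M := by rw [Matrix.mul_assoc, hLM, Matrix.mul_one]
  have hQQM : Q * Qᵀ * M = M := by
    apply eq_of_mulVec_eq'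
    intro v
    obtain ⟨w, hw⟩ : M.mulVec v ∈ LinearMap.range Q.mulVecLin := by
      rw [hrange]; exact ⟨v, rfl⟩
    simp only [Matrix.mulVecLin_apply] at hw
    calc (Q * Qᵀ * M).mulVec v = (Q * Qᵀ).mulVec (M.mulVec v) := by
          rw [Matrix.mulVec_mulVec]
      _ = (Q * Qᵀ).mulVec (Q.mulVec w) := by rw [hw]
      _ = (Q * Qᵀ * Q).mulVec w := by rw [Matrix.mulVec_mulVec]
      _ = Q.mulVec w := by rw [hQQQ]
      _ = M.mulVec v := hw
  have hMLQ : M * L * Q = Q := by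
    apply eq_of_mulVec_eq'
    intro v
    obtain ⟨w, hw⟩ : Q.mulVec v ∈ LinearMap.range M.mulVecLin := by
      rw [← hrange]; exact ⟨v, rfl⟩
    simp only [Matrix.mulVecLin_apply] at hw
    calc (M * L * Q).mulVec v = (M * L).mulVec (Q.mulVec v) := by
          rw [Matrix.mulVec_mulVec]
      _ = (M * L).mulVec (M.mulVec w) := by rw [hw]
      _ = (M * L * M).mulVec w := by rw [Matrix.mulVec_mulVec]
      _ = M.mulVec w := by rw [hMLM]
      _ = Q.mulVec v := hw
  -- G = Mᵀ * Q is invertible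
  set G : Matrix (Fin p) (Fin p) ℝ := Mᵀ * Q with hG
  have hGT : Gᵀ = Qᵀ * M := by rw [hG, Matrix.transpose_mul, Matrix.transpose_transpose]
  have hKR : Gᵀ * (L * Q) = 1 := by
    rw [hGT, Matrix.mul_assoc Qᵀ M (L * Q), ← Matrix.mul_assoc M L Q, hMLQ, hQ]
  have hRK : (L * Q) * Gᵀ = 1 := by
    rw [hGT, Matrix.mul_assoc L Q (Qᵀ * M), ← Matrix.mul_assoc Q Qᵀ M, hQQM, hLM]
  have hGTunit : IsUnit Gᵀ.det := Matrix.isUnit_det_of_right_inverse hKR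
  have hGunit : IsUnit G.det := by rwa [← Matrix.det_transpose]
  have e1 : Qᵀ * (M * S1 * Mᵀ) * Q = Gᵀ * S1 * G := by
    rw [hGT, hG]; simp only [Matrix.mul_assoc]
  have e2 : Qᵀ * (M * S2 * Mᵀ) * Q = Gᵀ * S2 * G := by
    rw [hGT, hG]; simp only [Matrix.mul_assoc]
  rw [e1, e2, logDetDiv_congr S1 S2 G h1.det_pos.ne' (isUnit_iff_ne_zero.mpr h2.det_pos.ne') hGunit, sub_self]
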